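/- arXiv:1907.07400 — 5 statements merged into one kernel-verified Lean document; each statement's English description precedes it below -/
import Mathlib

section
/- Let n ≥ 1, let x, ξ ∈ ℝ^{n+1} satisfy ‖x‖ = 1 and ξ ≠ 0, let X be a skew-symmetric real (n+1)×(n+1) matrix, and set z = cosh(‖ξ‖)·x + i·(sinh(‖ξ‖)/‖ξ‖)·ξ ∈ ℂ^{n+1}. Then (i·z) ∙ (X·z) = (sinh(2‖ξ‖)/‖ξ‖)·(x·(Xξ)), and moreover ‖z‖² = cosh(2‖ξ‖). -/
open Real Complex Matrix

noncomputable section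

/-- The real inner product on `ℂ^m`:
`v ∙ w = ∑ⱼ (Re vⱼ)(Re wⱼ) + (Im vⱼ)(Im wⱼ)`. -/
noncomputable def dotR {m : ℕ} (v w : Fin m → ℂ) : ℝ :=
  ∑ j, ((v j).re * (w j).re + (v j).im * (w j).im)

/-- For `‖x‖ = 1`, `ξ ≠ 0`, `X` skew-symmetric and
`z = cosh(‖ξ‖)·x + i·(sinh(‖ξ‖)/‖ξ‖)·ξ`, one has
`(i·z) ∙ (X·z) = (sinh(2‖ξ‖)/‖ξ‖)·(x·(Xξ))` and `‖z‖² = cosh(2‖ξ‖)`. -/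
theorem stmt_3 (n : ℕ) (hn : 1 ≤ n) (x ξ : Fin (n + 1) → ℝ)
    (hx : Real.sqrt (∑ i, x i ^ 2) = 1) (hξ : ξ ≠ 0)
    (X : Matrix (Fin (n + 1)) (Fin (n + 1)) ℝ) (hX : X.transpose = -X)
    (r : ℝ) (hr : r = Real.sqrt (∑ i, ξ i ^ 2))
    (z : Fin (n + 1) → ℂ)
    (hz : z = fun j => ((Real.cosh r * x j : ℝ) : ℂ) +
      Complex.I * ((Real.sinh r / r * ξ j : ℝ) : ℂ)) :
    dotR (fun j => Complex.I * z j) ((X.map (fun a => (a : ℂ))).mulVec z)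
        = Real.sinh (2 * r) / r * (∑ i, x i * X.mulVec ξ i) ∧
      dotR z z = Real.cosh (2 * r) := by
  have hsum : 0 < ∑ i, ξ i ^ 2 := by
    rcases Function.ne_iff.1 hξ with ⟨i, hi⟩
    have hi2 : 0 < ξ i ^ 2 := by
      have : ξ i ≠ 0 := hi
      positivity
    exact Finset.sum_pos' (fun j _ => sq_nonneg _) ⟨i, Finset.mem_univ i, hi2⟩
  have hr0 : 0 < r := by rw [hr]; exact Real.sqrt_pos.2 hsum
  have hx2 : ∑ i, x i ^ 2 = 1 := by
    have := congrArg (fun t => t ^ 2) hx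
    simpa [Real.sq_sqrt (Finset.sum_nonneg fun i _ => sq_nonneg (x i))] using this
  have hξ2 : ∑ i, ξ i ^ 2 = r ^ 2 := by
    rw [hr, Real.sq_sqrt hsum.le]
  have zre : ∀ j, (z j).re = Real.cosh r * x j := by intro j; simp [hz]
  have zim : ∀ j, (z j).im = Real.sinh r / r * ξ j := by
    intro j; simp [hz, Complex.sinh_ofReal_re]
  have hXskew : ∀ j k, X j k = - X k j := by
    intro j k
    have := congrFun (congrFun hX k) j
    simpa [Matrix.transpose_apply] using this
  have key : ∑ j, ∑ k, ξ j * (X j k * x k) = - ∑ j, ∑ k, x j * (X j k * ξ k) := by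
    rw [Finset.sum_comm, ← Finset.sum_neg_distrib]
    refine Finset.sum_congr rfl fun k _ => ?_
    rw [← Finset.sum_neg_distrib]
    refine Finset.sum_congr rfl fun j _ => ?_
    rw [hXskew j k]; ring
  have pull : ∀ (c : ℝ) (f g : Fin (n + 1) → ℝ),
      (∑ k, f k * (c * g k)) = c * ∑ k, f k * g k := by
    intro c f g
    rw [Finset.mul_sum]
    exact Finset.sum_congr rfl fun k _ => by ring
  constructor
  · simp only [dotR, Matrix.mulVec, dotProduct, Matrix.map_apply,
      Complex.re_sum, Complex.im_sum, Complex.mul_re, Complex.mul_im,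
      Complex.I_re, Complex.I_im, Complex.ofReal_re, Complex.ofReal_im,
      zre, zim, zero_mul, one_mul, mul_zero, sub_zero, add_zero, zero_add, zero_sub]
    have hterm : ∀ j : Fin (n + 1),
        -(Real.sinh r / r * ξ j) * (∑ k, X j k * (Real.cosh r * x k)) +
          Real.cosh r * x j * (∑ k, X j k * (Real.sinh r / r * ξ k))
        = Real.cosh r * (Real.sinh r / r) * (x j * ∑ k, X j k * ξ k)
          - Real.cosh r * (Real.sinh r / r) * (ξ j * ∑ k, X j k * x k) := by
      intro j
      rw [pull, pull]; ring
    rw [Finset.sum_congr rfl fun j _ => hterm j, Finset.sum_sub_distrib,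
        ← Finset.mul_sum, ← Finset.mul_sum]
    have hkey' : ∑ j, ξ j * ∑ k, X j k * x k = - ∑ j, x j * ∑ k, X j k * ξ k := by
      simpa [Finset.mul_sum] using key
    rw [hkey', Real.sinh_two_mul]
    field_simp
    ring
  · simp only [dotR, zre, zim]
    have h : ∑ j, (Real.cosh r * x j * (Real.cosh r * x j) +
        Real.sinh r / r * ξ j * (Real.sinh r / r * ξ j))
        = Real.cosh r ^ 2 * ∑ j, x j ^ 2 + (Real.sinh r / r) ^ 2 * ∑ j, ξ j ^ 2 := by
      rw [Finset.mul_sum, Finset.mul_sum, ← Finset.sum_add_distrib]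
      exact Finset.sum_congr rfl fun j _ => by ring
    rw [h, hx2, hξ2, Real.cosh_two_mul]
    have h1 : Real.cosh r ^ 2 = Real.sinh r ^ 2 + 1 := Real.cosh_sq r
    field_simp
end
end

section
/- Let u : ℝ → ℝ be differentiable. Let φ₁, φ₂ ∈ ℝ and (ξ₂,ξ₄,ξ₆) ∈ ℝ³\{0}, set r = √(ξ₂²+ξ₄²+ξ₆²), x = (cosφ₁cosφ₂, 0, cosφ₁sinφ₂, 0, sinφ₁, 0) ∈ ℝ⁶, ξ = (0,ξ₂,0,ξ₄,0,ξ₆) ∈ ℝ⁶, and z = cosh(r)·x + i·(sinh(r)/r)·ξ ∈ ℂ⁶. Then, with η = ξ₁₂ + ξ₃₄ + ξ₅₆ ∈ M(6,ℝ), one has u′(‖z‖²)·((i·z) ∙ (η·z)) = −K(r)·(cosφ₁cosφ₂·ξ₂ + cosφ₁sinφ₂·ξ₄ + sinφ₁·ξ₆), where K(t) = u′(cosh(2t))·sinh(2t)/t. -/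
/-! Write `z = a + i b` with `a, b` real. Then `‖z‖² = |a|² + |b|²`, and for a skew-symmetric real
`η` one gets `(i z) ∙ (η z) = a · η b − b · η a = −2 (η a) · b`. For `a = cosh r · x` and
`b = (sinh r / r) · ξ`, with `|x| = 1` and `|ξ| = r`, this gives `‖z‖² = cosh 2r` and
`(i z) ∙ (η z) = −(sinh 2r / r) (η x) · ξ`; finally `(ξ_{ij} v) · w = v_i w_j − v_j w_i`
turns `(η x) · ξ` into the pairing on the right-hand side. -/

open Real Complex Matrix

noncomputable section

/-- `ξ_{ij} = E_{ji} − E_{ij}`. -/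
def xiMat {m : ℕ} (i j : Fin m) : Matrix (Fin m) (Fin m) ℝ :=
  Matrix.single j i 1 - Matrix.single i j 1

theorem re_map_ofReal_mulVec {m n : Type*} [Fintype n] (A : Matrix m n ℝ) (z : n → ℂ) (i : m) :
    ((A.map ((↑) : ℝ → ℂ) *ᵥ z) i).re = (A *ᵥ fun j => (z j).re) i := by
  simp [mulVec, dotProduct, Complex.re_sum]

theorem im_map_ofReal_mulVec {m n : Type*} [Fintype n] (A : Matrix m n ℝ) (z : n → ℂ) (i : m) :
    ((A.map ((↑) : ℝ → ℂ) *ᵥ z) i).im = (A *ᵥ fun j => (z j).im) i := by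
  simp [mulVec, dotProduct, Complex.im_sum]

theorem dotR_self_ofReal_add_I_mul {m : ℕ} (a b : Fin m → ℝ) :
    dotR (fun j => (a j : ℂ) + I * (b j : ℂ)) (fun j => (a j : ℂ) + I * (b j : ℂ))
      = a ⬝ᵥ a + b ⬝ᵥ b := by
  simp [dotR, dotProduct, Finset.sum_add_distrib]

theorem dotR_I_mul_mulVec_of_transpose_eq_neg {m : ℕ} {A : Matrix (Fin m) (Fin m) ℝ}
    (hA : Aᵀ = -A) (a b : Fin m → ℝ) :
    dotR (fun j => I * ((a j : ℂ) + I * (b j : ℂ)))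
        (A.map ((↑) : ℝ → ℂ) *ᵥ fun j => (a j : ℂ) + I * (b j : ℂ))
      = -2 * ((A *ᵥ a) ⬝ᵥ b) := by
  have hskew : a ⬝ᵥ (A *ᵥ b) = -((A *ᵥ a) ⬝ᵥ b) := by
    rw [dotProduct_mulVec, ← mulVec_transpose, hA, neg_mulVec, neg_dotProduct]
  calc _ = a ⬝ᵥ (A *ᵥ b) - b ⬝ᵥ (A *ᵥ a) := by
        simp [dotR, re_map_ofReal_mulVec, im_map_ofReal_mulVec, dotProduct,
          Finset.sum_add_distrib, sub_eq_neg_add]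
    _ = -2 * ((A *ᵥ a) ⬝ᵥ b) := by rw [hskew, dotProduct_comm b]; ring

theorem xiMat_transpose {m : ℕ} (i j : Fin m) : (xiMat i j)ᵀ = -xiMat i j := by
  simp [xiMat, transpose_sub, Matrix.transpose_single]

theorem xiMat_mulVec_dotProduct {m : ℕ} (i j : Fin m) (v w : Fin m → ℝ) :
    (xiMat i j *ᵥ v) ⬝ᵥ w = v i * w j - v j * w i := by
  simp [xiMat, sub_mulVec, single_mulVec, dotProduct, Function.update_apply, sub_mul,
    Finset.sum_sub_distrib]

theorem cosh_sq_add_sinh_div_sq_mul_sq (r : ℝ) :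
    Real.cosh r ^ 2 + (Real.sinh r / r) ^ 2 * r ^ 2 = Real.cosh (2 * r) := by
  rcases eq_or_ne r 0 with rfl | hr
  · simp
  · rw [Real.cosh_two_mul, div_pow, div_mul_cancel₀ _ (pow_ne_zero 2 hr)]

theorem stmt_4_general (u : ℝ → ℝ)
    (φ₁ φ₂ ξ₂ ξ₄ ξ₆ : ℝ)
    (r : ℝ) (hr : r = Real.sqrt (ξ₂ ^ 2 + ξ₄ ^ 2 + ξ₆ ^ 2))
    (x ξ : Fin 6 → ℝ)
    (hx : x = ![Real.cos φ₁ * Real.cos φ₂, 0, Real.cos φ₁ * Real.sin φ₂, 0, Real.sin φ₁, 0])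
    (hξv : ξ = ![0, ξ₂, 0, ξ₄, 0, ξ₆])
    (z : Fin 6 → ℂ)
    (hz : z = fun j => ((Real.cosh r * x j : ℝ) : ℂ) +
      Complex.I * ((Real.sinh r / r * ξ j : ℝ) : ℂ))
    (η : Matrix (Fin 6) (Fin 6) ℝ) (hη : η = xiMat 0 1 + xiMat 2 3 + xiMat 4 5)
    (K : ℝ → ℝ) (hK : K = fun t => deriv u (Real.cosh (2 * t)) * Real.sinh (2 * t) / t) :
    deriv u (dotR z z) *
        dotR (fun j => Complex.I * z j) ((η.map (fun a => (a : ℂ))).mulVec z)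
      = -K r * (Real.cos φ₁ * Real.cos φ₂ * ξ₂ + Real.cos φ₁ * Real.sin φ₂ * ξ₄
          + Real.sin φ₁ * ξ₆) := by
  replace hz : z = fun j => (((Real.cosh r • x) j : ℝ) : ℂ) +
      I * ((((Real.sinh r / r) • ξ) j : ℝ) : ℂ) := hz
  have hxx : x ⬝ᵥ x = 1 := by
    simp only [hx, dotProduct, Fin.sum_univ_six, cons_val]
    linear_combination (Real.cos φ₁ ^ 2) * Real.sin_sq_add_cos_sq φ₂ + Real.sin_sq_add_cos_sq φ₁
  have hξξ : ξ ⬝ᵥ ξ = r ^ 2 := by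
    rw [hr, Real.sq_sqrt (by positivity)]
    simp only [hξv, dotProduct, Fin.sum_univ_six, cons_val]
    ring
  have hηxξ : (η *ᵥ x) ⬝ᵥ ξ = Real.cos φ₁ * Real.cos φ₂ * ξ₂ + Real.cos φ₁ * Real.sin φ₂ * ξ₄
      + Real.sin φ₁ * ξ₆ := by
    simp only [hη, add_mulVec, add_dotProduct, xiMat_mulVec_dotProduct, hx, hξv]
    simp
  have hη_skew : ηᵀ = -η := by
    simp only [hη, transpose_add, xiMat_transpose, neg_add]
  have hnorm : dotR z z = Real.cosh (2 * r) := by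
    rw [hz, dotR_self_ofReal_add_I_mul, smul_dotProduct, dotProduct_smul, smul_dotProduct,
      dotProduct_smul, hxx, hξξ, ← cosh_sq_add_sinh_div_sq_mul_sq]
    simp only [smul_eq_mul]; ring
  rw [hnorm, hz, dotR_I_mul_mulVec_of_transpose_eq_neg hη_skew, mulVec_smul, smul_dotProduct,
    dotProduct_smul, hηxξ, hK]
  simp only [smul_eq_mul, Real.sinh_two_mul]
  ring

/-- The moment map component `μ_η` of the diagonal `SO(2)`-action on `T*S⁵`
at points of `Φ(L₁)`, `L₁ = T^{*⊥}S² ⊂ T*S⁵`: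
`u′(‖z‖²)·((i·z) ∙ (η·z)) = −K(r)·(cosφ₁cosφ₂·ξ₂ + cosφ₁sinφ₂·ξ₄ + sinφ₁·ξ₆)`
with `K(t) = u′(cosh 2t)·sinh(2t)/t`. -/
theorem stmt_4 (u : ℝ → ℝ) (hu : Differentiable ℝ u)
    (φ₁ φ₂ ξ₂ ξ₄ ξ₆ : ℝ) (hξ : ¬(ξ₂ = 0 ∧ ξ₄ = 0 ∧ ξ₆ = 0))
    (r : ℝ) (hr : r = Real.sqrt (ξ₂ ^ 2 + ξ₄ ^ 2 + ξ₆ ^ 2))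
    (x ξ : Fin 6 → ℝ)
    (hx : x = ![Real.cos φ₁ * Real.cos φ₂, 0, Real.cos φ₁ * Real.sin φ₂, 0, Real.sin φ₁, 0])
    (hξv : ξ = ![0, ξ₂, 0, ξ₄, 0, ξ₆])
    (z : Fin 6 → ℂ)
    (hz : z = fun j => ((Real.cosh r * x j : ℝ) : ℂ) +
      Complex.I * ((Real.sinh r / r * ξ j : ℝ) : ℂ))
    (η : Matrix (Fin 6) (Fin 6) ℝ) (hη : η = xiMat 0 1 + xiMat 2 3 + xiMat 4 5)
    (K : ℝ → ℝ) (hK : K = fun t => deriv u (Real.cosh (2 * t)) * Real.sinh (2 * t) / t) :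
    deriv u (dotR z z) *
        dotR (fun j => Complex.I * z j) ((η.map (fun a => (a : ℂ))).mulVec z)
      = -K r * (Real.cos φ₁ * Real.cos φ₂ * ξ₂ + Real.cos φ₁ * Real.sin φ₂ * ξ₄
          + Real.sin φ₁ * ξ₆) :=
  stmt_4_general u φ₁ φ₂ ξ₂ ξ₄ ξ₆ r hr x ξ hx hξv z hz η hη K hK
end
end

section
/- Let u : ℝ → ℝ be differentiable. Let φ₁, φ₂ ∈ ℝ and (ξ₂,ξ₄,ξ₆,ξ₇) ∈ ℝ⁴\{0}, set r = √(ξ₂²+ξ₄²+ξ₆²+ξ₇²), x = (cosφ₁cosφ₂, 0, cosφ₁sinφ₂, 0, sinφ₁, 0, 0) ∈ ℝ⁷, ξ = (0,ξ₂,0,ξ₄,0,ξ₆,ξ₇) ∈ ℝ⁷, and z = cosh(r)·x + i·(sinh(r)/r)·ξ ∈ ℂ⁷. Define μ_{ij}(z) = u′(‖z‖²)·((i·z) ∙ (ξ_{ij}·z)) and K(t) = u′(cosh(2t))·sinh(2t)/t. Then: μ₁₂(z) = −K(r)·cosφ₁cosφ₂·ξ₂; μ₃₄(z) = −K(r)·cosφ₁sinφ₂·ξ₄;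 μ₅₆(z) = −K(r)·sinφ₁·ξ₆; μ₅₇(z) = −K(r)·sinφ₁·ξ₇; and μ₆₇(z) = 0. -/
/-! For every `z ∈ ℂᵐ`, `(i z) ∙ (ξ_{ij} z) = 2 (Re z_j Im z_i - Re z_i Im z_j)`. At a point
`z = cosh r • x + i (sinh r / r) • ξ` of the Szőke image with `‖x‖ = 1`, `‖ξ‖ = r` this is
`2 cosh r (sinh r / r) (x_j ξ_i - x_i ξ_j) = (sinh 2r / r) (x_j ξ_i - x_i ξ_j)`, while
`‖z‖² = cosh² r + sinh² r = cosh 2r`; hence `μ_{ij}(z) = K(r) (x_j ξ_i - x_i ξ_j)`, and the five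
components are read off from the zero pattern of `x` and `ξ`. -/

open Real Complex Matrix

noncomputable section

/-- `μ_{ij}(z) = u′(‖z‖²)·((i·z) ∙ (ξ_{ij}·z))`. -/
noncomputable def muComp {m : ℕ} (u : ℝ → ℝ) (i j : Fin m) (z : Fin m → ℂ) : ℝ :=
  deriv u (dotR z z) *
    dotR (fun k => Complex.I * z k) (((xiMat i j).map (fun a => (a : ℂ))).mulVec z)

theorem xiMat_map_mulVec {m : ℕ} (i j : Fin m) (z : Fin m → ℂ) :
    (xiMat i j).map (fun a => (a : ℂ)) *ᵥ z = Pi.single j (z i) - Pi.single i (z j) := by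
  ext k
  simp only [mulVec, dotProduct, xiMat, single, ite_and, of_sub_of, map_apply, of_apply,
    Pi.sub_apply, ofReal_sub, apply_ite Complex.ofReal, ofReal_one, ofReal_zero, sub_mul, ite_mul,
    one_mul, zero_mul, Finset.sum_sub_distrib, Finset.sum_ite_irrel, Finset.sum_ite_eq,
    Finset.mem_univ, if_true, Finset.sum_const_zero, Pi.single_apply, eq_comm]

theorem dotR_I_mul_xiMat_map_mulVec {m : ℕ} (i j : Fin m) (z : Fin m → ℂ) :
    dotR (fun k => I * z k) ((xiMat i j).map (fun a => (a : ℂ)) *ᵥ z) =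
      2 * ((z j).re * (z i).im - (z i).re * (z j).im) := by
  rw [xiMat_map_mulVec]
  simp only [dotR, I_mul_re, I_mul_im, Pi.sub_apply, sub_re, sub_im, Pi.single_apply,
    apply_ite Complex.re, apply_ite Complex.im, zero_re, zero_im, mul_sub, mul_ite, mul_zero,
    Finset.sum_add_distrib, Finset.sum_sub_distrib, Finset.sum_ite_eq', Finset.mem_univ, if_true]
  ring

theorem muComp_eq {m : ℕ} (u : ℝ → ℝ) (i j : Fin m) (z : Fin m → ℂ) :
    muComp u i j z = deriv u (∑ k, ((z k).re ^ 2 + (z k).im ^ 2)) *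
      (2 * ((z j).re * (z i).im - (z i).re * (z j).im)) := by
  rw [muComp, dotR_I_mul_xiMat_map_mulVec]
  simp only [dotR, sq]

theorem sum_sq_cosh_mul_add_sinh_div_mul {m : ℕ} (a b : Fin m → ℝ) (r : ℝ)
    (ha : ∑ k, a k ^ 2 = 1) (hb : ∑ k, b k ^ 2 = r ^ 2) :
    ∑ k, ((Real.cosh r * a k) ^ 2 + (Real.sinh r / r * b k) ^ 2) = Real.cosh (2 * r) := by
  have hsinh : Real.sinh r / r * r = Real.sinh r :=
    div_mul_cancel_of_imp fun h => by simp [h]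
  simp only [mul_pow, Finset.sum_add_distrib, ← Finset.mul_sum, ha, hb]
  linear_combination (Real.sinh r / r * r + Real.sinh r) * hsinh - Real.cosh_two_mul r

theorem muComp_cosh_mul_add_I_sinh_div_mul {m : ℕ} (u : ℝ → ℝ) (a b : Fin m → ℝ) (r : ℝ)
    (ha : ∑ k, a k ^ 2 = 1) (hb : ∑ k, b k ^ 2 = r ^ 2) (i j : Fin m) :
    muComp u i j (fun k => ((Real.cosh r * a k : ℝ) : ℂ) + I * ((Real.sinh r / r * b k : ℝ) : ℂ)) =
      deriv u (Real.cosh (2 * r)) * Real.sinh (2 * r) / r * (a j * b i - a i * b j) := by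
  simp only [muComp_eq, add_re, add_im, ofReal_re, ofReal_im, I_mul_re, I_mul_im, neg_zero,
    add_zero, zero_add]
  rw [sum_sq_cosh_mul_add_sinh_div_mul a b r ha hb, Real.sinh_two_mul]
  ring

theorem stmt_6_general (u : ℝ → ℝ)
    (φ₁ φ₂ ξ₂ ξ₄ ξ₆ ξ₇ : ℝ)
    (r : ℝ) (hr : r = Real.sqrt (ξ₂ ^ 2 + ξ₄ ^ 2 + ξ₆ ^ 2 + ξ₇ ^ 2))
    (x ξ : Fin 7 → ℝ)
    (hx : x = ![Real.cos φ₁ * Real.cos φ₂, 0, Real.cos φ₁ * Real.sin φ₂, 0,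
      Real.sin φ₁, 0, 0])
    (hξv : ξ = ![0, ξ₂, 0, ξ₄, 0, ξ₆, ξ₇])
    (z : Fin 7 → ℂ)
    (hz : z = fun j => ((Real.cosh r * x j : ℝ) : ℂ) +
      Complex.I * ((Real.sinh r / r * ξ j : ℝ) : ℂ))
    (K : ℝ → ℝ) (hK : K = fun t => deriv u (Real.cosh (2 * t)) * Real.sinh (2 * t) / t) :
    muComp u 0 1 z = -K r * (Real.cos φ₁ * Real.cos φ₂) * ξ₂ ∧
    muComp u 2 3 z = -K r * (Real.cos φ₁ * Real.sin φ₂) * ξ₄ ∧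
    muComp u 4 5 z = -K r * Real.sin φ₁ * ξ₆ ∧
    muComp u 4 6 z = -K r * Real.sin φ₁ * ξ₇ ∧
    muComp u 5 6 z = 0 := by
  have hx_sq : ∑ k, x k ^ 2 = 1 := by
    simp only [hx, Fin.sum_univ_seven, cons_val_zero, cons_val_one, cons_val]
    linear_combination Real.cos φ₁ ^ 2 * Real.sin_sq_add_cos_sq φ₂ + Real.sin_sq_add_cos_sq φ₁
  have hξ_sq : ∑ k, ξ k ^ 2 = r ^ 2 := by
    rw [hr, Real.sq_sqrt (by positivity)]
    simp only [hξv, Fin.sum_univ_seven, cons_val_zero, cons_val_one, cons_val]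
    ring
  have hμ (i j : Fin 7) : muComp u i j z = K r * (x j * ξ i - x i * ξ j) := by
    rw [hz, hK, muComp_cosh_mul_add_I_sinh_div_mul u x ξ r hx_sq hξ_sq]
  refine ⟨?_, ?_, ?_, ?_, ?_⟩ <;>
    simp only [hμ, hx, hξv, cons_val_zero, cons_val_one, cons_val] <;> ring

/-- Components of the moment map of the `SO(2)×SO(2)×SO(3)`-action on `T*S⁶`
at points of `Φ(L)`, `L = T^{*⊥}S² ⊂ T*S⁶`, with respect to the basis
`(ξ₁₂, ξ₃₄, ξ₅₆, ξ₅₇, ξ₆₇)` of the Lie algebra. -/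
theorem stmt_6 (u : ℝ → ℝ) (hu : Differentiable ℝ u)
    (φ₁ φ₂ ξ₂ ξ₄ ξ₆ ξ₇ : ℝ) (hξ : ¬(ξ₂ = 0 ∧ ξ₄ = 0 ∧ ξ₆ = 0 ∧ ξ₇ = 0))
    (r : ℝ) (hr : r = Real.sqrt (ξ₂ ^ 2 + ξ₄ ^ 2 + ξ₆ ^ 2 + ξ₇ ^ 2))
    (x ξ : Fin 7 → ℝ)
    (hx : x = ![Real.cos φ₁ * Real.cos φ₂, 0, Real.cos φ₁ * Real.sin φ₂, 0,
      Real.sin φ₁, 0, 0])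
    (hξv : ξ = ![0, ξ₂, 0, ξ₄, 0, ξ₆, ξ₇])
    (z : Fin 7 → ℂ)
    (hz : z = fun j => ((Real.cosh r * x j : ℝ) : ℂ) +
      Complex.I * ((Real.sinh r / r * ξ j : ℝ) : ℂ))
    (K : ℝ → ℝ) (hK : K = fun t => deriv u (Real.cosh (2 * t)) * Real.sinh (2 * t) / t) :
    muComp u 0 1 z = -K r * (Real.cos φ₁ * Real.cos φ₂) * ξ₂ ∧
    muComp u 2 3 z = -K r * (Real.cos φ₁ * Real.sin φ₂) * ξ₄ ∧
    muComp u 4 5 z = -K r * Real.sin φ₁ * ξ₆ ∧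
    muComp u 4 6 z = -K r * Real.sin φ₁ * ξ₇ ∧
    muComp u 5 6 z = 0 :=
  stmt_6_general u φ₁ φ₂ ξ₂ ξ₄ ξ₆ ξ₇ r hr x ξ hx hξv z hz K hK
end
end

section
/- Let φ ∈ ℝ and (ξ₂,ξ₄,ξ₅,ξ₆) ∈ ℝ⁴\{0}, set r = √(ξ₂²+ξ₄²+ξ₅²+ξ₆²), x = (cosφ, 0, sinφ, 0, 0, 0) ∈ ℝ⁶, ξ = (0,ξ₂,0,ξ₄,ξ₅,ξ₆) ∈ ℝ⁶, z = cosh(r)·x + i·(sinh(r)/r)·ξ ∈ ℂ⁶, η = ξ₁₂+ξ₃₄+ξ₅₆ ∈ M(6,ℝ), and F(r) = cosh(r) − sinh(r)/r. Define the vectors P = cosh(r)·(−sinφ·e₁ + cosφ·e₃) and Q_j = (sinh(r)/r)·ξ_j·x + i·((ξ_j/r²)·F(r)·ξ + (sinh(r)/r)·e_j) for j ∈ {2,4,5,6}, all in ℂ⁶. Then i·(η·z) − (sinh(r)/r)·(ξ₆·e₅ − ξ₅·e₆) lies in the real linear span of {P, Q₂, Q₄, Q₅, Q₆}. -/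
/-!
Write complex vectors as `u + i v` with `u, v` real. Then `i η z` minus the correction term is
`(sinh r / r)(ξ₂ e₁ + ξ₄ e₃) + i cosh r · w` with `w = cos φ e₂ + sin φ e₄`, while `∑ a_j Q_j` has
real part `(sinh r / r)⟨a, ξ⟩ x` and imaginary part `M a = (F / r²)⟨a, ξ⟩ ξ + (sinh r / r) a`.
As `|ξ| = r` and `F + sinh r / r = cosh r`, the map `M` is `cosh r` on `ξ` and `sinh r / r` on
`ξ^⊥`, so `M a = cosh r · w` has an explicit solution, and it satisfies `⟨a, ξ⟩ = ⟨w, ξ⟩`.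
The real part that is left over lies in the plane of `x` and `P` and is absorbed by `b P`.
-/

open Real Complex Matrix

noncomputable section

section

variable {ι : Type*}

def ofReIm : (ι → ℝ) × (ι → ℝ) →ₗ[ℝ] ι → ℂ where
  toFun p k := (p.1 k : ℂ) + I * (p.2 k : ℂ)
  map_add' p q := by
    funext k
    simp only [Prod.fst_add, Prod.snd_add, Pi.add_apply, ofReal_add]
    ring
  map_smul' b p := by
    funext k
    simp only [Prod.smul_fst, Prod.smul_snd, Pi.smul_apply, smul_eq_mul, ofReal_mul,
      RingHom.id_apply, Complex.real_smul]
    ring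

theorem ofReIm_apply (u v : ι → ℝ) (k : ι) : ofReIm (u, v) k = (u k : ℂ) + I * (v k : ℂ) := rfl

theorem ofReIm_mk_zero (u : ι → ℝ) : ofReIm (u, 0) = fun k => (u k : ℂ) := by
  funext k
  simp only [ofReIm_apply, Pi.zero_apply, ofReal_zero, mul_zero, add_zero]

theorem I_mul_ofReIm_sub_ofReal (u v t : ι → ℝ) (c : ℝ) :
    (fun k => I * ofReIm (u, v) k - ((c * t k : ℝ) : ℂ)) = ofReIm (-v - c • t, u) := by
  funext k
  simp only [ofReIm_apply, Pi.sub_apply, Pi.neg_apply, Pi.smul_apply, smul_eq_mul, ofReal_sub,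
    ofReal_neg, ofReal_mul]
  linear_combination (v k : ℂ) * I_sq

theorem map_ofReal_mulVec_ofReIm [Fintype ι] (A : Matrix ι ι ℝ) (u v : ι → ℝ) :
    A.map (fun a => (a : ℂ)) *ᵥ ofReIm (u, v) = ofReIm (A *ᵥ u, A *ᵥ v) := by
  funext k
  simp only [mulVec, dotProduct, map_apply, ofReIm_apply, ofReal_sum, ofReal_mul, mul_add,
    Finset.sum_add_distrib, Finset.mul_sum]
  congr 1
  exact Finset.sum_congr rfl fun l _ => by ring

theorem sum_smul_tangent_eq_ofReIm [Fintype ι] [DecidableEq ι] (a ξ x : ι → ℝ) (S r F : ℝ) :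
    ∑ j, a j • (fun k => ((S / r * ξ j * x k : ℝ) : ℂ) +
        I * ((ξ j / r ^ 2 * F * ξ k + S / r * (if k = j then 1 else 0) : ℝ) : ℂ)) =
      ofReIm ((S / r * (a ⬝ᵥ ξ)) • x, (F / r ^ 2 * (a ⬝ᵥ ξ)) • ξ + (S / r) • a) := by
  have hQ (j : ι) : (fun k => ((S / r * ξ j * x k : ℝ) : ℂ) +
      I * ((ξ j / r ^ 2 * F * ξ k + S / r * (if k = j then 1 else 0) : ℝ) : ℂ)) =
      ofReIm ((S / r * ξ j) • x, (ξ j / r ^ 2 * F) • ξ + (S / r) • Pi.single j 1) := by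
    funext k
    simp only [ofReIm_apply, Pi.add_apply, Pi.smul_apply, smul_eq_mul, Pi.single_apply]
  simp only [hQ, ← map_smul, ← map_sum]
  congr 1
  ext1
  · simp only [Prod.fst_sum, Prod.smul_fst, smul_smul, ← Finset.sum_smul, dotProduct,
      Finset.mul_sum]
    congr 1
    exact Finset.sum_congr rfl fun j _ => by ring
  · simp only [Prod.snd_sum, Prod.smul_snd, smul_add, Finset.sum_add_distrib, smul_smul,
      ← Finset.sum_smul, dotProduct, Finset.mul_sum]
    congr 1
    · congr 1
      exact Finset.sum_congr rfl fun j _ => by ring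
    · ext k
      simp [Finset.sum_apply, Pi.single_apply, mul_comm]

-- With `F = C - S / r`, the map `a ↦ (F / r²)⟨a, ξ⟩ ξ + (S / r) a` is `C` on `ξ` and `S / r` on
-- `ξ^⊥`, which makes its inverse explicit.
theorem exists_tangent_preimage {K : Type*} [Field K] [Fintype ι] {ξ : ι → K} {r S : K}
    (hξ : ξ ⬝ᵥ ξ = r ^ 2) (hr : r ≠ 0) (hS : S ≠ 0) (C : K) (w : ι → K) :
    ∃ a : ι → K, (∀ i, w i = 0 → ξ i = 0 → a i = 0) ∧ a ⬝ᵥ ξ = w ⬝ᵥ ξ ∧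
      ((C - S / r) / r ^ 2 * (a ⬝ᵥ ξ)) • ξ + (S / r) • a = C • w := by
  set a := (r / S) • (C • w - ((C - S / r) / r ^ 2 * (w ⬝ᵥ ξ)) • ξ) with ha
  have hdot : a ⬝ᵥ ξ = w ⬝ᵥ ξ := by
    rw [ha, smul_dotProduct, sub_dotProduct, smul_dotProduct, smul_dotProduct, hξ, smul_eq_mul,
      smul_eq_mul, smul_eq_mul]
    field_simp
    ring
  refine ⟨a, fun i hwi hξi => by simp [ha, hwi, hξi], hdot, ?_⟩
  rw [hdot, ha, smul_smul, div_mul_div_cancel₀ hr, div_self hS, one_smul, add_sub_cancel]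

end

theorem xiMat_mulVec {m : ℕ} (i j : Fin m) (v : Fin m → ℝ) :
    xiMat i j *ᵥ v = Pi.single j (v i) - Pi.single i (v j) := by
  funext k
  simp [xiMat, sub_mulVec, Matrix.single_mulVec, Pi.single_apply, Function.update_apply]

theorem I_mul_xiMat_mulVec_sub (C S φ ξ₂ ξ₄ ξ₅ ξ₆ : ℝ) :
    (fun k => I * ((xiMat 0 1 + xiMat 2 3 + xiMat 4 5).map (fun a => (a : ℂ)) *ᵥ
        ofReIm (C • ![Real.cos φ, 0, Real.sin φ, 0, 0, 0], S • ![0, ξ₂, 0, ξ₄, ξ₅, ξ₆])) k -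
      ((S * (![0, 0, 0, 0, ξ₆, -ξ₅] : Fin 6 → ℝ) k : ℝ) : ℂ)) =
      ofReIm (S • ![ξ₂, 0, ξ₄, 0, 0, 0], C • ![0, Real.cos φ, 0, Real.sin φ, 0, 0]) := by
  rw [map_ofReal_mulVec_ofReIm, I_mul_ofReIm_sub_ofReal]
  simp only [add_mulVec, mulVec_smul, xiMat_mulVec]
  congr 1
  ext1 <;> funext k <;> fin_cases k <;> simp

theorem smul_angular_add_smul_radial (φ ξ₂ ξ₄ ξ₅ ξ₆ c : ℝ) :
    (c * (ξ₄ * Real.cos φ - ξ₂ * Real.sin φ)) • ![-Real.sin φ, 0, Real.cos φ, 0, 0, 0] +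
      (c * (![0, Real.cos φ, 0, Real.sin φ, 0, 0] ⬝ᵥ ![0, ξ₂, 0, ξ₄, ξ₅, ξ₆])) •
        ![Real.cos φ, 0, Real.sin φ, 0, 0, 0] = c • ![ξ₂, 0, ξ₄, 0, 0, 0] := by
  funext k
  fin_cases k <;>
    simp only [Fin.zero_eta, Fin.mk_one, Fin.reduceFinMk, Fin.isValue, Pi.add_apply, Pi.smul_apply,
      smul_eq_mul, dotProduct, Fin.sum_univ_six, cons_val_zero, cons_val_one, cons_val, mul_zero,
      mul_neg, zero_mul, zero_add, add_zero]
  · linear_combination c * ξ₂ * Real.sin_sq_add_cos_sq φ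
  · linear_combination c * ξ₄ * Real.sin_sq_add_cos_sq φ

/-- The generalized perpendicularity condition (LagAng-H) for the diagonal
`SO(2)`-action along `L₂ = T^{*⊥}S¹ ⊂ T*S⁵`:
`i·(η·z) − (sinh r / r)·(ξ₆·e₅ − ξ₅·e₆)` lies in the real span of the tangent
vectors `P, Q₂, Q₄, Q₅, Q₆` of `Φ(L₂)` at `z`. -/
theorem stmt_9 (φ ξ₂ ξ₄ ξ₅ ξ₆ : ℝ) (hξ : ¬(ξ₂ = 0 ∧ ξ₄ = 0 ∧ ξ₅ = 0 ∧ ξ₆ = 0))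
    (r : ℝ) (hr : r = Real.sqrt (ξ₂ ^ 2 + ξ₄ ^ 2 + ξ₅ ^ 2 + ξ₆ ^ 2))
    (F : ℝ) (hF : F = Real.cosh r - Real.sinh r / r)
    (x ξ : Fin 6 → ℝ)
    (hx : x = ![Real.cos φ, 0, Real.sin φ, 0, 0, 0])
    (hξv : ξ = ![0, ξ₂, 0, ξ₄, ξ₅, ξ₆])
    (z : Fin 6 → ℂ)
    (hz : z = fun j => ((Real.cosh r * x j : ℝ) : ℂ) +
      Complex.I * ((Real.sinh r / r * ξ j : ℝ) : ℂ))
    (η : Matrix (Fin 6) (Fin 6) ℝ) (hη : η = xiMat 0 1 + xiMat 2 3 + xiMat 4 5)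
    (P : Fin 6 → ℂ)
    (hP : P = fun k => ((Real.cosh r *
      (![-(Real.sin φ), 0, Real.cos φ, 0, 0, 0] : Fin 6 → ℝ) k : ℝ) : ℂ))
    (Q : Fin 6 → Fin 6 → ℂ)
    (hQ : Q = fun j k => ((Real.sinh r / r * ξ j * x k : ℝ) : ℂ) +
      Complex.I * ((ξ j / r ^ 2 * F * ξ k +
        Real.sinh r / r * (if k = j then 1 else 0) : ℝ) : ℂ)) :
    ∃ b a₂ a₄ a₅ a₆ : ℝ,
      b • P + a₂ • Q 1 + a₄ • Q 3 + a₅ • Q 4 + a₆ • Q 5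
        = fun k => Complex.I * (η.map (fun a => (a : ℂ))).mulVec z k -
            ((Real.sinh r / r *
              (![0, 0, 0, 0, ξ₆, -ξ₅] : Fin 6 → ℝ) k : ℝ) : ℂ) := by
  have hP' : P = ofReIm (Real.cosh r • ![-Real.sin φ, 0, Real.cos φ, 0, 0, 0], 0) := by
    rw [ofReIm_mk_zero]
    exact hP
  have hz' : z = ofReIm (Real.cosh r • x, (Real.sinh r / r) • ξ) := hz
  subst hx hξv
  have hξξ : ![0, ξ₂, 0, ξ₄, ξ₅, ξ₆] ⬝ᵥ ![0, ξ₂, 0, ξ₄, ξ₅, ξ₆] =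
      ξ₂ ^ 2 + ξ₄ ^ 2 + ξ₅ ^ 2 + ξ₆ ^ 2 := by
    simp only [dotProduct, Fin.sum_univ_six, Fin.isValue, cons_val_zero, cons_val_one, cons_val,
      mul_zero, zero_add, add_zero]
    ring
  have hpos : 0 < ξ₂ ^ 2 + ξ₄ ^ 2 + ξ₅ ^ 2 + ξ₆ ^ 2 := by
    contrapose! hξ
    refine ⟨?_, ?_, ?_, ?_⟩ <;> nlinarith [sq_nonneg ξ₂, sq_nonneg ξ₄, sq_nonneg ξ₅, sq_nonneg ξ₆]
  have hr0 : 0 < r := hr ▸ Real.sqrt_pos.2 hpos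
  rw [← sq_sqrt hpos.le, ← hr] at hξξ
  obtain ⟨a, ha, hdot, himag⟩ := exists_tangent_preimage hξξ hr0.ne'
    (Real.sinh_pos_iff.2 hr0).ne' (Real.cosh r) ![0, Real.cos φ, 0, Real.sin φ, 0, 0]
  rw [← hF] at himag
  refine ⟨Real.sinh r / r * (ξ₄ * Real.cos φ - ξ₂ * Real.sin φ) / Real.cosh r,
    a 1, a 3, a 4, a 5, ?_⟩
  have hsum : a 1 • Q 1 + (a 3 • Q 3 + (a 4 • Q 4 + a 5 • Q 5)) = ∑ j, a j • Q j := by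
    simp only [Fin.sum_univ_six, ha 0 rfl rfl, ha 2 rfl rfl, zero_smul, zero_add, add_zero,
      add_assoc]
  simp only [add_assoc]
  rw [hsum, hQ, sum_smul_tangent_eq_ofReIm, hP', ← map_smul, ← map_add, hz', hη,
    I_mul_xiMat_mulVec_sub]
  congr 1
  ext1
  · rw [Prod.fst_add, Prod.smul_fst, smul_smul, div_mul_cancel₀ _ (Real.cosh_pos r).ne', hdot,
      smul_angular_add_smul_radial]
  · rwa [Prod.snd_add, Prod.smul_snd, smul_zero, zero_add]
end
end

section
/- Let g : ℝ → ℝ be differentiable, η = ξ₁₂+ξ₃₄+ξ₅₆ ∈ M(6,ℝ), and define f : ℂ⁶ → ℝ by f(w) = g(‖w‖²)·((i·w) ∙ (η·w)). Let φ ∈ ℝ and (ξ₂,ξ₄,ξ₅,ξ₆) ∈ ℝ⁴\{0}, set r = √(ξ₂²+ξ₄²+ξ₅²+ξ₆²), x = (cosφ, 0, sinφ, 0, 0, 0) ∈ ℝ⁶, ξ = (0,ξ₂,0,ξ₄,ξ₅,ξ₆) ∈ ℝ⁶, and z = cosh(r)·x + i·(sinh(r)/r)·ξ ∈ ℂ⁶.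 Then f is differentiable at z and its Fréchet derivative at z vanishes on the vector v = i·(−ξ₆·e₅ + ξ₅·e₆): Df(z)[v] = 0 (here ℂ⁶ is viewed as a real vector space). -/
/-! Along the line `t ↦ z + t • v`, both `‖w‖²` and the quadratic form `w ↦ (i w) ∙ (η w)` are
quadratic polynomials in `t` without linear term: `v` is orthogonal to `z`, and the polarization
of the form vanishes on `(z, v)`, because `v` lives in the `(e₅, e₆)`-block, which `η` preserves
and on which both `z` and `v` are purely imaginary. So `f (z + t • v)` is a differentiable
function of `t²`, whose derivative at `t = 0` vanishes. -/

open Real Complex Matrix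

noncomputable section

section dotR

variable {m : ℕ}

lemma dotR_add_smul_add_smul (u v u' v' : Fin m → ℂ) (t : ℝ) :
    dotR (u + t • v) (u' + t • v') =
      dotR u u' + t * (dotR u v' + dotR v u') + t ^ 2 * dotR v v' := by
  simp only [dotR, Finset.mul_sum, ← Finset.sum_add_distrib]
  refine Finset.sum_congr rfl fun j _ => ?_
  simp only [Pi.add_apply, Pi.smul_apply, Complex.add_re, Complex.add_im, Complex.real_smul,
    Complex.re_ofReal_mul, Complex.im_ofReal_mul]
  ring

lemma Differentiable.dotR {E : Type*} [NormedAddCommGroup E] [NormedSpace ℝ E]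
    {a b : E → Fin m → ℂ} (ha : Differentiable ℝ a) (hb : Differentiable ℝ b) :
    Differentiable ℝ fun w => _root_.dotR (a w) (b w) := by
  have hre (c : E → Fin m → ℂ) (hc : Differentiable ℝ c) (j : Fin m) :
      Differentiable ℝ fun w => (c w j).re :=
    reCLM.differentiable.comp (differentiable_pi.1 hc j)
  have him (c : E → Fin m → ℂ) (hc : Differentiable ℝ c) (j : Fin m) :
      Differentiable ℝ fun w => (c w j).im :=
    imCLM.differentiable.comp (differentiable_pi.1 hc j)
  unfold _root_.dotR
  exact Differentiable.fun_sum fun j _ =>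
    ((hre a ha j).mul (hre b hb j)).add ((him a ha j).mul (him b hb j))

lemma dotR_comm (v w : Fin m → ℂ) : dotR v w = dotR w v :=
  Finset.sum_congr rfl fun j _ => by ring

end dotR

section momentMap

variable {m : ℕ} (g : ℝ → ℝ) (A : Matrix (Fin m) (Fin m) ℝ)

def quadraticMoment (w : Fin m → ℂ) : ℝ :=
  dotR (fun k => I * w k) ((A.map (fun a => (a : ℂ))).mulVec w)

def quadraticMomentPolar (z v : Fin m → ℂ) : ℝ :=
  dotR (fun k => I * z k) ((A.map (fun a => (a : ℂ))).mulVec v) +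
    dotR (fun k => I * v k) ((A.map (fun a => (a : ℂ))).mulVec z)

def momentMapComponent (w : Fin m → ℂ) : ℝ :=
  g (dotR w w) * quadraticMoment A w

lemma quadraticMoment_add_smul (z v : Fin m → ℂ) (t : ℝ) :
    quadraticMoment A (z + t • v) =
      quadraticMoment A z + t * quadraticMomentPolar A z v + t ^ 2 * quadraticMoment A v := by
  have hI : (fun k => I * (z + t • v) k) = (fun k => I * z k) + t • fun k => I * v k := by
    ext k
    simp only [Pi.add_apply, Pi.smul_apply, mul_add, mul_smul_comm]
  rw [quadraticMoment, hI, mulVec_add, mulVec_smul, dotR_add_smul_add_smul]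
  rfl

lemma differentiable_quadraticMoment : Differentiable ℝ (quadraticMoment A) := by
  refine Differentiable.dotR ?_ ?_
  · exact differentiable_pi.2 fun k => (differentiable_apply k).const_mul I
  · exact ((A.map (fun a => (a : ℂ))).mulVecLin.restrictScalars ℝ).toContinuousLinearMap
      |>.differentiable

lemma differentiableAt_momentMapComponent {z : Fin m → ℂ}
    (hg : DifferentiableAt ℝ g (dotR z z)) :
    DifferentiableAt ℝ (momentMapComponent g A) z :=
  (hg.comp (f := fun w => dotR w w) z ((differentiable_id.dotR differentiable_id) z)).mul
    (differentiable_quadraticMoment A z)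

lemma hasDerivAt_comp_sq_zero {h : ℝ → ℝ} (hh : DifferentiableAt ℝ h 0) :
    HasDerivAt (fun t => h (t ^ 2)) 0 0 := by
  have hh' : DifferentiableAt ℝ h ((0 : ℝ) ^ 2) := by simpa using hh
  simpa [Function.comp_def] using
    hh'.hasDerivAt.comp (h := fun t : ℝ => t ^ 2) 0 (hasDerivAt_pow 2 0)

theorem fderiv_momentMapComponent_apply_eq_zero {z v : Fin m → ℂ}
    (hg : DifferentiableAt ℝ g (dotR z z)) (h_orth : dotR z v = 0)
    (h_polar : quadraticMomentPolar A z v = 0) :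
    fderiv ℝ (momentMapComponent g A) z v = 0 := by
  have h_line : (fun t : ℝ => momentMapComponent g A (z + t • v)) = fun t =>
      g (dotR z z + t ^ 2 * dotR v v) * (quadraticMoment A z + t ^ 2 * quadraticMoment A v) := by
    ext t
    rw [momentMapComponent, dotR_add_smul_add_smul, quadraticMoment_add_smul, h_polar,
      dotR_comm v z, h_orth]
    ring_nf
  have h_even : DifferentiableAt ℝ (fun s : ℝ =>
      g (dotR z z + s * dotR v v) * (quadraticMoment A z + s * quadraticMoment A v)) 0 := by
    refine DifferentiableAt.mul ?_ (by fun_prop)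
    have hg' : DifferentiableAt ℝ g (dotR z z + 0 * dotR v v) := by simpa using hg
    exact hg'.comp (0 : ℝ) (by fun_prop)
  rw [← (differentiableAt_momentMapComponent g A hg).lineDeriv_eq_fderiv, lineDeriv, h_line]
  exact (hasDerivAt_comp_sq_zero h_even).deriv

end momentMap

lemma xiMat_eta_map_mulVec (w : Fin 6 → ℂ) :
    ((xiMat 0 1 + xiMat 2 3 + xiMat 4 5 : Matrix (Fin 6) (Fin 6) ℝ).map (fun a => (a : ℂ))) *ᵥ w =
      ![-w 1, w 0, -w 3, w 2, -w 5, w 4] := by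
  funext j
  fin_cases j <;>
    simp [xiMat, Matrix.mulVec, dotProduct, Fin.sum_univ_six, Matrix.single]

theorem stmt_10_general (g : ℝ → ℝ) (hg : Differentiable ℝ g)
    (η : Matrix (Fin 6) (Fin 6) ℝ) (hη : η = xiMat 0 1 + xiMat 2 3 + xiMat 4 5)
    (f : (Fin 6 → ℂ) → ℝ)
    (hf : f = fun w => g (dotR w w) *
      dotR (fun k => Complex.I * w k) ((η.map (fun a => (a : ℂ))).mulVec w))
    (φ ξ₂ ξ₄ ξ₅ ξ₆ : ℝ)
    (r : ℝ)
    (x ξ : Fin 6 → ℝ)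
    (hx : x = ![Real.cos φ, 0, Real.sin φ, 0, 0, 0])
    (hξv : ξ = ![0, ξ₂, 0, ξ₄, ξ₅, ξ₆])
    (z : Fin 6 → ℂ)
    (hz : z = fun j => ((Real.cosh r * x j : ℝ) : ℂ) +
      Complex.I * ((Real.sinh r / r * ξ j : ℝ) : ℂ))
    (v : Fin 6 → ℂ)
    (hv : v = fun k => Complex.I *
      (((![0, 0, 0, 0, -ξ₆, ξ₅] : Fin 6 → ℝ) k : ℝ) : ℂ)) :
    DifferentiableAt ℝ f z ∧ fderiv ℝ f z v = 0 := by
  obtain rfl : f = momentMapComponent g η := hf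
  subst hη hz hv hx hξv
  refine ⟨differentiableAt_momentMapComponent _ _ (hg _),
    fderiv_momentMapComponent_apply_eq_zero _ _ (hg _) ?_ ?_⟩
  · simp only [dotR, Fin.sum_univ_six, cons_val_zero, cons_val_one, cons_val, add_re, add_im,
      mul_re, mul_im, I_re, I_im, ofReal_re, ofReal_im]
    ring
  · simp [quadraticMomentPolar, xiMat_eta_map_mulVec, dotR, Fin.sum_univ_six]

/-- The differential of `f(w) = g(‖w‖²)·((i·w) ∙ (η·w))` at `z ∈ Φ(L₂)` vanishes
on the vector `v = i·(−ξ₆·e₅ + ξ₅·e₆)`, i.e. `(η#_z)₂ ∈ T_z μ_η^{-1}(μ_η(z))`. -/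
theorem stmt_10 (g : ℝ → ℝ) (hg : Differentiable ℝ g)
    (η : Matrix (Fin 6) (Fin 6) ℝ) (hη : η = xiMat 0 1 + xiMat 2 3 + xiMat 4 5)
    (f : (Fin 6 → ℂ) → ℝ)
    (hf : f = fun w => g (dotR w w) *
      dotR (fun k => Complex.I * w k) ((η.map (fun a => (a : ℂ))).mulVec w))
    (φ ξ₂ ξ₄ ξ₅ ξ₆ : ℝ) (hξ : ¬(ξ₂ = 0 ∧ ξ₄ = 0 ∧ ξ₅ = 0 ∧ ξ₆ = 0))
    (r : ℝ) (hr : r = Real.sqrt (ξ₂ ^ 2 + ξ₄ ^ 2 + ξ₅ ^ 2 + ξ₆ ^ 2))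
    (x ξ : Fin 6 → ℝ)
    (hx : x = ![Real.cos φ, 0, Real.sin φ, 0, 0, 0])
    (hξv : ξ = ![0, ξ₂, 0, ξ₄, ξ₅, ξ₆])
    (z : Fin 6 → ℂ)
    (hz : z = fun j => ((Real.cosh r * x j : ℝ) : ℂ) +
      Complex.I * ((Real.sinh r / r * ξ j : ℝ) : ℂ))
    (v : Fin 6 → ℂ)
    (hv : v = fun k => Complex.I *
      (((![0, 0, 0, 0, -ξ₆, ξ₅] : Fin 6 → ℝ) k : ℝ) : ℂ)) :
    DifferentiableAt ℝ f z ∧ fderiv ℝ f z v = 0 :=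
  stmt_10_general g hg η hη f hf φ ξ₂ ξ₄ ξ₅ ξ₆ r x ξ hx hξv z hz v hv
end
end
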